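/- Let e ≥ 3 be odd and k ≥ 1, and set ε = 0 if k is even and ε = 1 if k is odd. Then τ(2^{ek}) = |(1^{⌊ek/2⌋}, 1^{⌊ek/2⌋+ε}), (−(e+1)/2, 0)⟩, and this charged bipartition equals ã_{(1^k)}(|(∅, ∅), (−(e+1)/2, 0)⟩), i.e. it is obtained from the abacus of the charged empty bipartition by moving each of its first k e-periods one step to the right. In particular τ(2^{ek}) has depth k in the sl_∞-crystal and lies in the connected component whose source vertex is the empty bipartition. -/

import Mathlib

namespace GUnBranching

/-- A partition, given by its (0-indexed) weakly decreasing, eventually zero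
sequence of parts: `part k` is the (k+1)-st part `λ_{k+1}`. -/
structure Partition where
  part : ℕ → ℕ
  antitone : ∀ i j : ℕ, i ≤ j → part j ≤ part i
  eventually_zero : ∃ N : ℕ, ∀ n : ℕ, N ≤ n → part n = 0

namespace Partition

/-- The set of boxes (row, column) (0-indexed) of the Young diagram of a partition. -/
def boxSet (p : Partition) : Set (ℕ × ℕ) := {b | b.2 < p.part b.1}

/-- The size `|λ|` of a partition: the number of boxes of its Young diagram. -/
noncomputable def size (p : Partition) : ℕ := p.boxSet.ncard

/-- The β-set `β(λ) = {λ_k - k + 1 : k ≥ 1}` (0-indexed: `{part k - k : k ∈ ℕ}`). -/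
def betaSet (p : Partition) : Set ℤ := {z | ∃ k : ℕ, z = (p.part k : ℤ) - k}

/-- The charged β-set `{λ_k + s - k + 1 : k ≥ 1}` of `(λ, s)`. -/
def chargedBetaSet (p : Partition) (s : ℤ) : Set ℤ :=
  {z | ∃ k : ℕ, z = (p.part k : ℤ) + s - k}

/-- The number of (nonzero) parts of a partition. -/
noncomputable def length (p : Partition) : ℕ := {k : ℕ | p.part k ≠ 0}.ncard

end Partition

/-- The empty partition `∅`. -/
def emptyPartition : Partition :=
  ⟨fun _ => 0, fun _ _ _ => le_rfl, ⟨0, fun _ _ => rfl⟩⟩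

/-- The partition `3^a 2^b 1^c` (a parts equal to 3, b parts equal to 2, c parts equal to 1). -/
def threeTwoOne (a b c : ℕ) : Partition where
  part k := if k < a then 3 else if k < a + b then 2 else if k < a + b + c then 1 else 0
  antitone i j h := by (try dsimp only); split_ifs <;> omega
  eventually_zero := ⟨a + b + c, fun n hn => by (try dsimp only); split_ifs <;> omega⟩

/-- The column partition `1^m`. -/
def column (m : ℕ) : Partition := threeTwoOne 0 0 m

/-- The staircase partition `Δ_t = (t, t-1, …, 2, 1)`. -/
def staircase (t : ℕ) : Partition where
  part k := t - k
  antitone i j h := Nat.sub_le_sub_left h t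
  eventually_zero := ⟨t, fun n hn => Nat.sub_eq_zero_of_le hn⟩

/-- The partition `Δ_t ⊔ 1^r` (staircase with a column of `r` extra parts equal to 1). -/
def staircaseColumn (t r : ℕ) : Partition where
  part k := if k < t then t - k else if k < t + r then 1 else 0
  antitone i j h := by (try dsimp only); split_ifs <;> omega
  eventually_zero := ⟨t + r, fun n hn => by (try dsimp only); split_ifs <;> omega⟩

/-- `p ⊔ 1^r` : append `r` extra parts equal to 1 to the partition `p`. -/
noncomputable def appendOnes (p : Partition) (r : ℕ) : Partition where
  part k := max (p.part k) (if k < p.length + r then 1 else 0)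
  antitone i j h := max_le_max (p.antitone i j h) (by split_ifs <;> omega)
  eventually_zero := by
    obtain ⟨N, hN⟩ := p.eventually_zero
    refine ⟨max N (p.length + r), fun n hn => ?_⟩
    have h1 : p.part n = 0 := hN n (le_trans (le_max_left _ _) hn)
    have h2 : ¬ n < p.length + r := by
      have := le_trans (le_max_right N (p.length + r)) hn
      omega
    simp [h1, h2]

/-- `mu` is obtained from `lam` by removing one rim `e`-hook: on β-sets, a bead `x`
with an empty spot at `x - e` is moved to `x - e`. -/
def RemoveHook (e : ℕ) (lam mu : Partition) : Prop :=
  ∃ x : ℤ, x ∈ lam.betaSet ∧ (x - e) ∉ lam.betaSet ∧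
    mu.betaSet = insert (x - e) (lam.betaSet \ {x})

/-- A partition is an `e`-core if no rim `e`-hook can be removed from it. -/
def IsECore (e : ℕ) (p : Partition) : Prop := ∀ mu : Partition, ¬ RemoveHook e p mu

/-- `core` is the `e`-core of `lam`: it is obtained from `lam` by repeatedly removing
rim `e`-hooks, and no further rim `e`-hook can be removed. -/
def HasECore (e : ℕ) (lam core : Partition) : Prop :=
  Relation.ReflTransGen (RemoveHook e) lam core ∧ IsECore e core

/-- `lam` and `mu` have the same `e`-core. -/
def SameECore (e : ℕ) (lam mu : Partition) : Prop :=
  ∃ core : Partition, HasECore e lam core ∧ HasECore e mu core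

/-- `(q1, q2)` is the 2-quotient of `lam`: the odd (resp. even) β-numbers of `lam`,
transformed by `v ↦ (v+1)/2` (resp. `v ↦ v/2`), form the β-set of `q1` (resp. `q2`)
for a suitable charge. -/
def IsTwoQuotient (lam q1 q2 : Partition) : Prop :=
  (∃ c : ℤ, q1.chargedBetaSet c = {z : ℤ | 2 * z - 1 ∈ lam.betaSet}) ∧
  (∃ c : ℤ, q2.chargedBetaSet c = {z : ℤ | 2 * z ∈ lam.betaSet})

/-- The charge `s_t`: `(-(t+1+e)/2, t/2)` for even `t`, `(-(t+1)/2, (t+e)/2)` for odd `t`. -/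
def tauCharge (e t : ℕ) : ℤ × ℤ :=
  if t % 2 = 0 then (-(((t : ℤ) + 1 + e) / 2), (t : ℤ) / 2)
  else (-(((t : ℤ) + 1) / 2), ((t : ℤ) + e) / 2)

/-- `bp` is the twisted 2-quotient `τ(lam)` of `lam`, a partition with 2-core `Δ_t`:
it is the 2-quotient for even `t` and the swapped 2-quotient for odd `t`; the
corresponding charge is `tauCharge e t`. -/
def IsTwistedQuotient (t : ℕ) (lam : Partition) (bp : Partition × Partition) : Prop :=
  HasECore 2 lam (staircase t) ∧
  (if t % 2 = 0 then IsTwoQuotient lam bp.1 bp.2 else IsTwoQuotient lam bp.2 bp.1)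

/-- The abacus of a charged bipartition: positions are (column, row) where row
`0 : Fin 2` is the bottom row (first component, charge `s.1`) and row `1 : Fin 2`
the top row (second component, charge `s.2`). -/
def abacus (bp : Partition × Partition) (s : ℤ × ℤ) : Set (ℤ × Fin 2) :=
  {b | b.1 ∈ (if b.2 = (0 : Fin 2) then bp.1.chargedBetaSet s.1 else bp.2.chargedBetaSet s.2)}

/-- `P` is an `e`-period of the abacus `A`: beads `(x, r 0), (x-1, r 1), …, (x-e+1, r (e-1))`
of `A` where `x` is the largest column containing a bead of `A`, `r i = 0` (bottom row)
whenever `(x - i, bottom)` is a bead of `A` (for `i < e-1`), and once in the bottom row the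
period stays in the bottom row. -/
def IsEPeriodOf (e : ℕ) (A P : Set (ℤ × Fin 2)) : Prop :=
  ∃ (x : ℤ) (r : ℕ → Fin 2),
    P = {b | ∃ i : ℕ, i < e ∧ b = ((x - i : ℤ), r i)} ∧
    (∀ i : ℕ, i < e → ((x - i : ℤ), r i) ∈ A) ∧
    (∀ b ∈ A, b.1 ≤ x) ∧
    (∀ i : ℕ, i + 1 < e → ((x - i : ℤ), (0 : Fin 2)) ∈ A → r i = 0) ∧
    (∀ i : ℕ, i + 1 < e → r i = 0 → r (i + 1) = 0)

/-- `P 0, P 1, P 2, …` is the sequence of `e`-periods of `A`: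
each `P k` is the `e`-period of `A` minus the previous periods. -/
def IsPeriodSeq (e : ℕ) (A : Set (ℤ × Fin 2)) (P : ℕ → Set (ℤ × Fin 2)) : Prop :=
  ∀ k : ℕ, IsEPeriodOf e (A \ ⋃ i ∈ Finset.range k, P i) (P k)

/-- The abacus `A` is totally `e`-periodic: the `k`-th `e`-period exists for every `k`. -/
def TotallyPeriodic (e : ℕ) (A : Set (ℤ × Fin 2)) : Prop :=
  ∃ P : ℕ → Set (ℤ × Fin 2), IsPeriodSeq e A P

/-- `P` is the `(k+1)`-st `e`-period of `A` (so `k = 0` gives the first `e`-period). -/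
def IsKthPeriod (e : ℕ) (A : Set (ℤ × Fin 2)) (k : ℕ) (P : Set (ℤ × Fin 2)) : Prop :=
  ∃ Q : ℕ → Set (ℤ × Fin 2),
    (∀ i : ℕ, i ≤ k → IsEPeriodOf e (A \ ⋃ j ∈ Finset.range i, Q j) (Q i)) ∧ Q k = P

/-- Shift a set of abacus positions one step to the right. -/
def shiftRight (P : Set (ℤ × Fin 2)) : Set (ℤ × Fin 2) := {b | (b.1 - 1, b.2) ∈ P}

/-- Edge of the `sl_∞`-crystal moving the `(k+1)`-st `e`-period one step to the right:
the shifted period must again be the `(k+1)`-st `e`-period of the resulting abacus. -/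
def SlInfEdgeAt (e : ℕ) (s : ℤ × ℤ) (k : ℕ) (lam mu : Partition × Partition) : Prop :=
  TotallyPeriodic e (abacus lam s) ∧ TotallyPeriodic e (abacus mu s) ∧
  ∃ P : Set (ℤ × Fin 2),
    IsKthPeriod e (abacus lam s) k P ∧
    abacus mu s = (abacus lam s \ P) ∪ shiftRight P ∧
    IsKthPeriod e (abacus mu s) k (shiftRight P)

/-- Edge of the `sl_∞`-crystal. -/
def SlInfEdge (e : ℕ) (s : ℤ × ℤ) (lam mu : Partition × Partition) : Prop :=
  ∃ k : ℕ, SlInfEdgeAt e s k lam mu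

/-- A source vertex of the `sl_∞`-crystal: a vertex (totally `e`-periodic abacus)
with no incoming edge. -/
def IsSlInfSource (e : ℕ) (s : ℤ × ℤ) (bp : Partition × Partition) : Prop :=
  TotallyPeriodic e (abacus bp s) ∧ ∀ lam : Partition × Partition, ¬ SlInfEdge e s lam bp

/-- A box of a bipartition: (component, row, column), all 0-indexed
(component `0 : Fin 2` is the first component `λ¹`). -/
abbrev Box := Fin 2 × ℕ × ℕ

/-- The component of a bipartition indexed by `j : Fin 2`. -/
def comp (bp : Partition × Partition) (j : Fin 2) : Partition :=
  if j = 0 then bp.1 else bp.2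

/-- `b` is a box of the bipartition `bp`. -/
def IsBoxOf (bp : Partition × Partition) (b : Box) : Prop :=
  b.2.2 < (comp bp b.1).part b.2.1

/-- The (charged) content `ct(b) = y - x + s_j` of a box `b = (j, x, y)`. -/
def content (s : ℤ × ℤ) (b : Box) : ℤ :=
  (b.2.2 : ℤ) - (b.2.1 : ℤ) + (if b.1 = 0 then s.1 else s.2)

/-- `b` is an addable box of the bipartition `bp`. -/
def IsAddable (bp : Partition × Partition) (b : Box) : Prop :=
  b.2.2 = (comp bp b.1).part b.2.1 ∧
  (b.2.1 = 0 ∨ (comp bp b.1).part b.2.1 < (comp bp b.1).part (b.2.1 - 1))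

/-- `b` is a removable box of the bipartition `bp`. -/
def IsRemovable (bp : Partition × Partition) (b : Box) : Prop :=
  b.2.2 + 1 = (comp bp b.1).part b.2.1 ∧
  (comp bp b.1).part (b.2.1 + 1) < (comp bp b.1).part b.2.1

/-- The total order on addable/removable boxes: `b ≤ b'` iff `b = b'`, or
`ct(b) < ct(b')`, or the contents are equal, `b` lies in the second component and
`b'` in the first. -/
def boxLE (s : ℤ × ℤ) (b b' : Box) : Prop :=
  b = b' ∨ content s b < content s b' ∨
    (content s b = content s b' ∧ b.1 = 1 ∧ b'.1 = 0)

/-- The set of addable or removable boxes of residue `i` (the letters of the `i`-word). -/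
def IWord (e : ℕ) (s : ℤ × ℤ) (bp : Partition × Partition) (i : ZMod e) : Set Box :=
  {b | (IsAddable bp b ∨ IsRemovable bp b) ∧ ((content s b : ZMod e) = i)}

/-- A removable box of residue `i` surviving the Kashiwara cancellation: reading the
`i`-word in increasing order and cancelling each removable box with a following addable
box (recursively cancelling adjacent removable-addable pairs), `b` is not cancelled.
Equivalently, every final segment of the `i`-word starting at `b` contains strictly
more removable than addable boxes. -/
def SurvivingRemovable (e : ℕ) (s : ℤ × ℤ) (bp : Partition × Partition)
    (i : ZMod e) (b : Box) : Prop :=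
  b ∈ IWord e s bp i ∧ IsRemovable bp b ∧
  ∀ c ∈ IWord e s bp i, boxLE s b c →
    {d : Box | d ∈ IWord e s bp i ∧ IsAddable bp d ∧ boxLE s b d ∧ boxLE s d c}.ncard <
    {d : Box | d ∈ IWord e s bp i ∧ IsRemovable bp d ∧ boxLE s b d ∧ boxLE s d c}.ncard

/-- The good removable `i`-box: the smallest removable `i`-box surviving the
Kashiwara cancellation. -/
def IsGoodRemovable (e : ℕ) (s : ℤ × ℤ) (bp : Partition × Partition)
    (i : ZMod e) (b : Box) : Prop :=
  SurvivingRemovable e s bp i b ∧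
  ∀ b' : Box, SurvivingRemovable e s bp i b' → boxLE s b b'

/-- An addable box of residue `i` surviving the Kashiwara cancellation. -/
def SurvivingAddable (e : ℕ) (s : ℤ × ℤ) (bp : Partition × Partition)
    (i : ZMod e) (b : Box) : Prop :=
  b ∈ IWord e s bp i ∧ IsAddable bp b ∧
  ∀ c ∈ IWord e s bp i, boxLE s c b →
    {d : Box | d ∈ IWord e s bp i ∧ IsRemovable bp d ∧ boxLE s c d ∧ boxLE s d b}.ncard <
    {d : Box | d ∈ IWord e s bp i ∧ IsAddable bp d ∧ boxLE s c d ∧ boxLE s d b}.ncard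

/-- The good addable `i`-box: the largest addable `i`-box surviving the
Kashiwara cancellation. -/
def IsGoodAddable (e : ℕ) (s : ℤ × ℤ) (bp : Partition × Partition)
    (i : ZMod e) (b : Box) : Prop :=
  SurvivingAddable e s bp i b ∧
  ∀ b' : Box, SurvivingAddable e s bp i b' → boxLE s b' b

/-- A source vertex of the `ŝl_e`-crystal: no good removable `i`-box for any residue `i`. -/
def IsSlESource (e : ℕ) (s : ℤ × ℤ) (bp : Partition × Partition) : Prop :=
  ∀ (i : ZMod e) (b : Box), ¬ IsGoodRemovable e s bp i b

/-- `bp'` is obtained from `bp` by adding the box `b`. -/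
def AddBox (bp : Partition × Partition) (b : Box) (bp' : Partition × Partition) : Prop :=
  if b.1 = 0 then
    bp'.2 = bp.2 ∧ bp'.1.part = Function.update bp.1.part b.2.1 (bp.1.part b.2.1 + 1)
  else
    bp'.1 = bp.1 ∧ bp'.2.part = Function.update bp.2.part b.2.1 (bp.2.part b.2.1 + 1)

/-- Dominance order: `Dominates mu la` means `la ⊴ mu`. -/
def Dominates (mu la : Partition) : Prop :=
  ∀ k : ℕ, ∑ i ∈ Finset.range k, la.part i ≤ ∑ i ∈ Finset.range k, mu.part i

/-!
With the charge `s = (-(e+1)/2, 0)` the abacus of the empty bipartition consists of the rows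
`x ≤ s.1` and `x ≤ s.2`. Removing its `e`-period (the top row from `s.2` down to `s.1 + 1`, then
the bottom row) leaves the abacus of the empty bipartition with charge `(s.2 - e, s.1)`. So the
periods are consecutive blocks whose top parts alternate in width between `(e+1)/2` and
`(e-1)/2`, the first `k` of them cover `⌈ek/2⌉` top and `⌊ek/2⌋` bottom positions, and shifting
them one step right gives the abacus of `(1^⌊ek/2⌋, 1^⌈ek/2⌉)`.

Every remainder has rows closed to the left (`X ⊆ shiftRight X`), so after shifting the first `j`
periods, these shifted periods followed by the unshifted ones are still the successive periods;
this gives the chain of crystal edges. Conversely a shifted period always leaves a hole just left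
of its leftmost bead, so the empty bipartition has no incoming edge. The 2-quotient of `2^m` is
read off its β-set, whose only gaps below `2` are `2 - m` and `1 - m`.
-/

theorem Partition.ext_part {p q : Partition} (h : p.part = q.part) : p = q := by
  cases p; cases q; cases h; rfl

theorem column_zero : column 0 = emptyPartition :=
  Partition.ext_part (funext fun _ => by simp [column, threeTwoOne, emptyPartition])

theorem mem_chargedBetaSet_emptyPartition {c x : ℤ} :
    x ∈ emptyPartition.chargedBetaSet c ↔ x ≤ c := by
  constructor
  · rintro ⟨j, rfl⟩
    simp only [emptyPartition]
    omega
  · exact fun h => ⟨(c - x).toNat, by simp only [emptyPartition]; omega⟩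

theorem mem_chargedBetaSet_column {m : ℕ} {c x : ℤ} :
    x ∈ (column m).chargedBetaSet c ↔ x ≤ c + 1 ∧ x ≠ c + 1 - m := by
  simp only [Partition.chargedBetaSet, column, threeTwoOne, Set.mem_ofPred_eq]
  constructor
  · rintro ⟨j, rfl⟩
    split_ifs <;> omega
  · rintro ⟨h1, h2⟩
    by_cases hx : c + 1 - m < x
    · exact ⟨(c + 1 - x).toNat, by split_ifs <;> omega⟩
    · exact ⟨(c - x).toNat, by split_ifs <;> omega⟩

theorem mem_abacus_zero {bp : Partition × Partition} {s : ℤ × ℤ} {x : ℤ} :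
    (x, 0) ∈ abacus bp s ↔ x ∈ bp.1.chargedBetaSet s.1 := Iff.rfl

theorem mem_abacus_one {bp : Partition × Partition} {s : ℤ × ℤ} {x : ℤ} :
    (x, 1) ∈ abacus bp s ↔ x ∈ bp.2.chargedBetaSet s.2 := Iff.rfl

theorem mem_betaSet_twoRows {m : ℕ} {x : ℤ} :
    x ∈ (threeTwoOne 0 m 0).betaSet ↔ x ≤ 2 ∧ x ≠ 2 - m ∧ x ≠ 1 - m := by
  simp only [Partition.betaSet, threeTwoOne, Set.mem_ofPred_eq]
  constructor
  · rintro ⟨j, rfl⟩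
    split_ifs <;> omega
  · rintro ⟨h1, h2, h3⟩
    by_cases hx : 1 - (m : ℤ) < x
    · exact ⟨(2 - x).toNat, by split_ifs <;> omega⟩
    · exact ⟨(-x).toNat, by split_ifs <;> omega⟩

theorem mem_betaSet_staircase_zero {x : ℤ} : x ∈ (staircase 0).betaSet ↔ x ≤ 0 := by
  constructor
  · rintro ⟨j, rfl⟩
    simp [staircase]
  · exact fun h => ⟨(-x).toNat, by simp only [staircase]; omega⟩

theorem removeHook_twoRows_succ (m : ℕ) :
    RemoveHook 2 (threeTwoOne 0 (m + 1) 0) (threeTwoOne 0 m 0) := by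
  refine ⟨2 - (m : ℤ), ?_, ?_, Set.ext fun x => ?_⟩
  · rw [mem_betaSet_twoRows]; push_cast; omega
  · rw [mem_betaSet_twoRows]; push_cast; omega
  · simp only [Set.mem_insert_iff, Set.mem_sdiff, Set.mem_singleton_iff, mem_betaSet_twoRows]
    push_cast
    omega

theorem isECore_staircase_zero (e : ℕ) : IsECore e (staircase 0) := by
  rintro mu ⟨x, hx, hxe, -⟩
  rw [mem_betaSet_staircase_zero] at hx hxe
  omega

theorem hasECore_twoRows (m : ℕ) : HasECore 2 (threeTwoOne 0 m 0) (staircase 0) := by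
  refine ⟨?_, isECore_staircase_zero 2⟩
  induction m with
  | zero =>
    convert Relation.ReflTransGen.refl using 1
    exact Partition.ext_part (funext fun _ => by simp [threeTwoOne, staircase])
  | succ m ih => exact .head (removeHook_twoRows_succ m) ih

theorem isTwoQuotient_twoRows (m : ℕ) :
    IsTwoQuotient (threeTwoOne 0 m 0) (column (m / 2)) (column (m / 2 + m % 2)) := by
  refine ⟨⟨0, Set.ext fun x => ?_⟩, ⟨0, Set.ext fun x => ?_⟩⟩ <;>
  · simp only [mem_chargedBetaSet_column, Set.mem_ofPred_eq, mem_betaSet_twoRows]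
    omega

section Periods

theorem shiftRight_eq_preimage (P : Set (ℤ × Fin 2)) :
    shiftRight P = (fun b : ℤ × Fin 2 => (b.1 - 1, b.2)) ⁻¹' P := rfl

variable {e : ℕ} {A B P : Set (ℤ × Fin 2)}

theorem IsEPeriodOf.subset (h : IsEPeriodOf e A P) : P ⊆ A := by
  obtain ⟨x, r, rfl, hmem, -⟩ := h
  rintro _ ⟨i, hi, rfl⟩
  exact hmem i hi

theorem IsEPeriodOf.mono (h : IsEPeriodOf e A P) (hPB : P ⊆ B) (hBA : B ⊆ A) :
    IsEPeriodOf e B P := by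
  obtain ⟨x, r, rfl, -, hmax, hbot, hstay⟩ := h
  exact ⟨x, r, rfl, fun i hi => hPB ⟨i, hi, rfl⟩, fun b hb => hmax b (hBA hb),
    fun i hi hb => hbot i hi (hBA hb), hstay⟩

theorem IsEPeriodOf.shiftRight (h : IsEPeriodOf e A P) :
    IsEPeriodOf e (shiftRight A) (shiftRight P) := by
  obtain ⟨x, r, rfl, hmem, hmax, hbot, hstay⟩ := h
  refine ⟨x + 1, r, Set.ext fun b => ?_, fun i hi => ?_, fun b hb => ?_,
    fun i hi hb => hbot i hi ?_, hstay⟩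
  · simp only [GUnBranching.shiftRight, Set.mem_ofPred_eq, Prod.ext_iff]
    exact exists_congr fun i => and_congr_right fun _ => and_congr_left fun _ => by omega
  · show (x + 1 - i - 1, r i) ∈ A
    rw [add_sub_right_comm, add_sub_cancel_right]
    exact hmem i hi
  · linarith [hmax _ hb]
  · rwa [GUnBranching.shiftRight, Set.mem_ofPred_eq, add_sub_right_comm, add_sub_cancel_right]
      at hb

theorem IsEPeriodOf.diff_union_shiftRight_not_subset (h : IsEPeriodOf e A P) (he : 0 < e) :
    ¬ (B \ P ∪ GUnBranching.shiftRight P ⊆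
        GUnBranching.shiftRight (B \ P ∪ GUnBranching.shiftRight P)) := by
  obtain ⟨x, r, rfl, -⟩ := h
  intro hsub
  have hlast : ((x - (e - 1 : ℕ) : ℤ), r (e - 1)) ∈ {b | ∃ i, i < e ∧ b = ((x - i : ℤ), r i)} :=
    ⟨e - 1, by omega, rfl⟩
  have hshifted : ((x - (e - 1 : ℕ) + 1 : ℤ), r (e - 1)) ∈
      GUnBranching.shiftRight {b | ∃ i, i < e ∧ b = ((x - i : ℤ), r i)} := by
    simpa [GUnBranching.shiftRight] using hlast
  have hleft := hsub (Or.inr hshifted)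
  simp only [GUnBranching.shiftRight, Set.mem_ofPred_eq, add_sub_cancel_right] at hleft
  rcases hleft with hb | ⟨i, hi, hb⟩
  · exact hb.2 hlast
  · simp only [Prod.ext_iff] at hb
    omega

theorem diff_biUnion_range_eq {R Q : ℕ → Set (ℤ × Fin 2)} (hR : ∀ i, R (i + 1) = R i \ Q i)
    (k : ℕ) : R 0 \ ⋃ i ∈ Finset.range k, Q i = R k := by
  induction k with
  | zero => simp
  | succ k ih =>
    rw [Finset.range_add_one, Finset.set_biUnion_insert, Set.union_comm, ← Set.sdiff_sdiff, ih,
      hR]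

theorem isPeriodSeq_of_diff_eq {R Q : ℕ → Set (ℤ × Fin 2)}
    (hR : ∀ i, R (i + 1) = R i \ Q i) (hQ : ∀ i, IsEPeriodOf e (R i) (Q i)) :
    IsPeriodSeq e (R 0) Q :=
  fun k => diff_biUnion_range_eq hR k ▸ hQ k

end Periods

structure IsPeriodChain (e : ℕ) (R P : ℕ → Set (ℤ × Fin 2)) : Prop where
  isEPeriodOf : ∀ i, IsEPeriodOf e (R i) (P i)
  diff_eq : ∀ i, R (i + 1) = R i \ P i
  subset_shiftRight : ∀ i, R i ⊆ shiftRight (R i)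

/-- `R 0` with its first `j` periods (where `R j = R 0 \ (P 0 ∪ … ∪ P (j-1))`) shifted
one step to the right. -/
def shiftedAbacus (R : ℕ → Set (ℤ × Fin 2)) (j : ℕ) : Set (ℤ × Fin 2) :=
  R j ∪ shiftRight (R 0 \ R j)

def shiftedPeriods (P : ℕ → Set (ℤ × Fin 2)) (j i : ℕ) : Set (ℤ × Fin 2) :=
  if i < j then shiftRight (P i) else P i

def shiftedRemainder (R : ℕ → Set (ℤ × Fin 2)) (j i : ℕ) : Set (ℤ × Fin 2) :=
  if i ≤ j then R j ∪ shiftRight (R i \ R j) else R i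

theorem shiftedRemainder_of_le {R : ℕ → Set (ℤ × Fin 2)} {i j : ℕ} (hji : j ≤ i) :
    shiftedRemainder R j i = R i := by
  rcases hji.eq_or_lt with rfl | hlt
  · simp [shiftedRemainder, shiftRight_eq_preimage]
  · exact if_neg hlt.not_ge

namespace IsPeriodChain

variable {e : ℕ} {R P : ℕ → Set (ℤ × Fin 2)}

theorem antitone (h : IsPeriodChain e R P) : Antitone R :=
  antitone_nat_of_succ_le fun i => (h.diff_eq i).symm ▸ Set.sdiff_subset

theorem isPeriodSeq (h : IsPeriodChain e R P) : IsPeriodSeq e (R 0) P :=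
  isPeriodSeq_of_diff_eq h.diff_eq h.isEPeriodOf

theorem shiftedRemainder_succ (h : IsPeriodChain e R P) (j i : ℕ) :
    shiftedRemainder R j (i + 1) = shiftedRemainder R j i \ shiftedPeriods P j i := by
  rcases lt_or_ge i j with hij | hji
  · ext b
    have hnear : b ∈ R j → (b.1 - 1, b.2) ∉ P i := fun hb hP => by
      have hb' : (b.1 - 1, b.2) ∈ R (i + 1) := h.antitone hij (h.subset_shiftRight j hb)
      rw [h.diff_eq i] at hb'
      exact hb'.2 hP
    simp only [shiftedRemainder, shiftedPeriods, if_pos (show i + 1 ≤ j from hij), if_pos hij.le,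
      if_pos hij, h.diff_eq i, Set.mem_union, Set.mem_sdiff, GUnBranching.shiftRight,
      Set.mem_ofPred_eq]
    tauto
  · rw [shiftedRemainder_of_le (hji.trans i.le_succ), shiftedRemainder_of_le hji, shiftedPeriods,
      if_neg hji.not_gt, h.diff_eq i]

theorem isEPeriodOf_shiftedRemainder (h : IsPeriodChain e R P) (j i : ℕ) :
    IsEPeriodOf e (shiftedRemainder R j i) (shiftedPeriods P j i) := by
  rcases lt_or_ge i j with hij | hji
  · rw [shiftedPeriods, if_pos hij, shiftedRemainder, if_pos hij.le]
    have hRj : R j ⊆ shiftRight (R i) :=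
      (h.subset_shiftRight j).trans (Set.preimage_mono (h.antitone hij.le))
    refine (h.isEPeriodOf i).shiftRight.mono (fun b hb => Or.inr ⟨?_, fun hR => ?_⟩)
      (Set.union_subset hRj (Set.preimage_mono Set.sdiff_subset))
    · exact (h.isEPeriodOf i).subset hb
    · have hR' : _ ∈ R (i + 1) := h.antitone hij hR
      rw [h.diff_eq i] at hR'
      exact hR'.2 hb
  · rw [shiftedRemainder_of_le hji, shiftedPeriods, if_neg hji.not_gt]
    exact h.isEPeriodOf i

theorem isPeriodSeq_shiftedAbacus (h : IsPeriodChain e R P) (j : ℕ) :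
    IsPeriodSeq e (shiftedAbacus R j) (shiftedPeriods P j) := by
  have := isPeriodSeq_of_diff_eq (h.shiftedRemainder_succ j) (h.isEPeriodOf_shiftedRemainder j)
  rwa [shiftedRemainder, if_pos j.zero_le] at this

theorem shiftedAbacus_succ (h : IsPeriodChain e R P) (j : ℕ) :
    shiftedAbacus R (j + 1) = shiftedAbacus R j \ P j ∪ shiftRight (P j) := by
  ext b
  have hPR : b ∈ P j → b ∈ R j := fun hb => (h.isEPeriodOf j).subset hb
  have hPR' : (b.1 - 1, b.2) ∈ P j → (b.1 - 1, b.2) ∈ R j := fun hb => (h.isEPeriodOf j).subset hb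
  have hR0 : (b.1 - 1, b.2) ∈ R j → (b.1 - 1, b.2) ∈ R 0 := fun hb => h.antitone j.zero_le hb
  have hleft : b ∈ R j → (b.1 - 1, b.2) ∈ R j := fun hb => h.subset_shiftRight j hb
  simp only [shiftedAbacus, h.diff_eq j, Set.mem_union, Set.mem_sdiff, GUnBranching.shiftRight,
    Set.mem_ofPred_eq]
  tauto

theorem shiftedAbacus_eq_biUnion (h : IsPeriodChain e R P) (k : ℕ) :
    shiftedAbacus R k =
      (R 0 \ ⋃ i ∈ Finset.range k, P i) ∪ ⋃ i ∈ Finset.range k, shiftRight (P i) := by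
  have hrem := diff_biUnion_range_eq h.diff_eq k
  have hsub : ⋃ i ∈ Finset.range k, P i ⊆ R 0 :=
    Set.iUnion₂_subset fun i _ => ((h.isEPeriodOf i).subset).trans (h.antitone i.zero_le)
  unfold shiftedAbacus
  congr 1
  · exact hrem.symm
  · rw [← hrem, Set.sdiff_sdiff_cancel_left hsub, shiftRight_eq_preimage, Set.preimage_iUnion₂]
    rfl

theorem slInfEdgeAt {s : ℤ × ℤ} {lam mu : Partition × Partition} (h : IsPeriodChain e R P)
    {j : ℕ} (hlam : abacus lam s = shiftedAbacus R j)
    (hmu : abacus mu s = shiftedAbacus R (j + 1)) : SlInfEdgeAt e s j lam mu :=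
  ⟨⟨_, hlam ▸ h.isPeriodSeq_shiftedAbacus j⟩, ⟨_, hmu ▸ h.isPeriodSeq_shiftedAbacus (j + 1)⟩, P j,
    ⟨_, fun i _ => hlam ▸ h.isPeriodSeq_shiftedAbacus j i, if_neg (lt_irrefl j)⟩,
    by rw [hmu, hlam, h.shiftedAbacus_succ],
    ⟨_, fun i _ => hmu ▸ h.isPeriodSeq_shiftedAbacus (j + 1) i, if_pos j.lt_succ_self⟩⟩

end IsPeriodChain

theorem isSlInfSource_of_subset_shiftRight {e : ℕ} {s : ℤ × ℤ} {bp : Partition × Partition}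
    (he : 0 < e) (hT : TotallyPeriodic e (abacus bp s))
    (hleft : abacus bp s ⊆ shiftRight (abacus bp s)) : IsSlInfSource e s bp := by
  refine ⟨hT, fun lam ⟨k, _, _, P, ⟨Q, hQ, hQk⟩, hbp, _⟩ => ?_⟩
  subst hQk
  rw [hbp] at hleft
  exact (hQ k le_rfl).diff_union_shiftRight_not_subset he hleft

theorem abacus_empty_subset_shiftRight (s : ℤ × ℤ) :
    abacus (emptyPartition, emptyPartition) s ⊆
      shiftRight (abacus (emptyPartition, emptyPartition) s) := by
  rintro ⟨x, r⟩ hx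
  fin_cases r <;>
  · simp only [GUnBranching.shiftRight, Set.mem_ofPred_eq, Fin.zero_eta, Fin.mk_one,
      mem_abacus_zero, mem_abacus_one, mem_chargedBetaSet_emptyPartition] at hx ⊢
    omega

theorem abacus_columns (m₀ m₁ : ℕ) (s : ℤ × ℤ) :
    abacus (column m₀, column m₁) s =
      abacus (emptyPartition, emptyPartition) (s.1 - m₀, s.2 - m₁) ∪
        shiftRight (abacus (emptyPartition, emptyPartition) s \
          abacus (emptyPartition, emptyPartition) (s.1 - m₀, s.2 - m₁)) := by
  ext ⟨x, r⟩
  fin_cases r <;>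
  · simp only [GUnBranching.shiftRight, Set.mem_union, Set.mem_sdiff, Set.mem_ofPred_eq,
      Fin.zero_eta, Fin.mk_one, mem_abacus_zero, mem_abacus_one, mem_chargedBetaSet_emptyPartition,
      mem_chargedBetaSet_column]
    omega

def period (e : ℕ) (s : ℤ × ℤ) : Set (ℤ × Fin 2) :=
  {b | ∃ i : ℕ, i < e ∧ b = (s.2 - i, if (i : ℤ) < s.2 - s.1 then 1 else 0)}

theorem mem_period {e : ℕ} {s : ℤ × ℤ} {x : ℤ} {r : Fin 2} :
    (x, r) ∈ period e s ↔ s.2 - e < x ∧ x ≤ s.2 ∧ (r = 1 ↔ s.1 < x) := by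
  constructor
  · rintro ⟨i, hi, hx⟩
    simp only [Prod.ext_iff] at hx
    obtain ⟨rfl, rfl⟩ := hx
    refine ⟨by omega, by omega, ?_⟩
    split_ifs <;> simp only [Fin.isValue, true_iff, zero_ne_one, false_iff, not_lt] <;> omega
  · rintro ⟨h₁, h₂, hr⟩
    refine ⟨(s.2 - x).toNat, by omega, Prod.ext (by simp only [Int.ofNat_toNat]; omega) ?_⟩
    split_ifs with h
    · exact hr.2 (by omega)
    · fin_cases r
      · rfl
      · exact absurd (hr.1 rfl) (by omega)

theorem isEPeriodOf_period {e : ℕ} {s : ℤ × ℤ} (hs : s.1 ≤ s.2) :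
    IsEPeriodOf e (abacus (emptyPartition, emptyPartition) s) (period e s) := by
  refine ⟨s.2, fun i => if (i : ℤ) < s.2 - s.1 then 1 else 0, rfl, fun i _ => ?_,
    fun ⟨x, r⟩ hb => ?_, fun i _ hb => ?_, fun i _ hi => ?_⟩
  · beta_reduce
    split_ifs
    · rw [mem_abacus_one, mem_chargedBetaSet_emptyPartition]; omega
    · rw [mem_abacus_zero, mem_chargedBetaSet_emptyPartition]; omega
  · fin_cases r <;>
    · simp only [Fin.zero_eta, Fin.mk_one, mem_abacus_zero, mem_abacus_one,
        mem_chargedBetaSet_emptyPartition] at hb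
      simp only
      omega
  · rw [mem_abacus_zero, mem_chargedBetaSet_emptyPartition] at hb
    exact if_neg (by omega)
  · simp only [ite_eq_right_iff, one_ne_zero, imp_false, not_lt] at hi ⊢
    omega

theorem abacus_empty_diff_period {e : ℕ} {s : ℤ × ℤ} (h₁ : s.1 ≤ s.2) (h₂ : s.2 ≤ s.1 + e) :
    abacus (emptyPartition, emptyPartition) s \ period e s =
      abacus (emptyPartition, emptyPartition) (s.2 - e, s.1) := by
  ext ⟨x, r⟩
  fin_cases r <;>
  · simp only [Set.mem_sdiff, Fin.zero_eta, Fin.mk_one, mem_abacus_zero, mem_abacus_one,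
      mem_chargedBetaSet_emptyPartition, mem_period, Fin.isValue, zero_ne_one, false_iff, true_iff,
      not_lt, not_and, not_le]
    omega

/-- The charge of the empty bipartition whose abacus is left after removing the first `i`
`e`-periods from the abacus of the empty bipartition with charge `s`. -/
def chargeAfterPeriods (e : ℕ) (s : ℤ × ℤ) : ℕ → ℤ × ℤ
  | 0 => s
  | i + 1 => ((chargeAfterPeriods e s i).2 - e, (chargeAfterPeriods e s i).1)

theorem chargeAfterPeriods_bounds {e : ℕ} {s : ℤ × ℤ} (h₁ : s.1 ≤ s.2) (h₂ : s.2 ≤ s.1 + e)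
    (i : ℕ) :
    (chargeAfterPeriods e s i).1 ≤ (chargeAfterPeriods e s i).2 ∧
      (chargeAfterPeriods e s i).2 ≤ (chargeAfterPeriods e s i).1 + e := by
  induction i with
  | zero => exact ⟨h₁, h₂⟩
  | succ i ih =>
    simp only [chargeAfterPeriods]
    omega

theorem isPeriodChain_abacus_empty {e : ℕ} {s : ℤ × ℤ} (h₁ : s.1 ≤ s.2) (h₂ : s.2 ≤ s.1 + e) :
    IsPeriodChain e (fun i => abacus (emptyPartition, emptyPartition) (chargeAfterPeriods e s i))
      (fun i => period e (chargeAfterPeriods e s i)) where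
  isEPeriodOf i := isEPeriodOf_period (chargeAfterPeriods_bounds h₁ h₂ i).1
  diff_eq i := (abacus_empty_diff_period (chargeAfterPeriods_bounds h₁ h₂ i).1
    (chargeAfterPeriods_bounds h₁ h₂ i).2).symm
  subset_shiftRight _ := abacus_empty_subset_shiftRight _

theorem chargeAfterPeriods_eq {e : ℕ} (he : Odd e) {s : ℤ × ℤ} (hs : s.2 = s.1 + ((e : ℤ) + 1) / 2)
    (j : ℕ) :
    chargeAfterPeriods e s j = (s.1 - (e * j / 2 : ℕ), s.2 - (e * j / 2 + e * j % 2 : ℕ)) := by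
  obtain ⟨d, rfl⟩ := he
  induction j with
  | zero => simp [chargeAfterPeriods]
  | succ j ih =>
    have hmul : (2 * d + 1) * (j + 1) = (2 * d + 1) * j + (2 * d + 1) := by ring
    rw [chargeAfterPeriods, ih, hmul, Prod.ext_iff]
    constructor <;> simp only <;> omega

theorem twisted_quotient_two_rows_general
    (e k : ℕ) (he : Odd e)
    (eps : ℕ) (heps : eps = if k % 2 = 0 then 0 else 1)
    (s : ℤ × ℤ) (hs : s = (-(((e : ℤ) + 1) / 2), 0))
    (bp : Partition × Partition)
    (hbp : bp = (column (e * k / 2), column (e * k / 2 + eps))) :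
    tauCharge e 0 = s ∧
    IsTwistedQuotient 0 (threeTwoOne 0 (e * k) 0) bp ∧
    (∃ P : ℕ → Set (ℤ × Fin 2),
      IsPeriodSeq e (abacus (emptyPartition, emptyPartition) s) P ∧
      abacus bp s =
        ((abacus (emptyPartition, emptyPartition) s) \ ⋃ i ∈ Finset.range k, P i) ∪
          ⋃ i ∈ Finset.range k, shiftRight (P i)) ∧
    IsSlInfSource e s (emptyPartition, emptyPartition) ∧
    (∃ c : ℕ → Partition × Partition,
      c 0 = (emptyPartition, emptyPartition) ∧ c k = bp ∧
      ∀ j : ℕ, j < k → SlInfEdge e s (c j) (c (j + 1))) := by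
  have hs₁ : s.1 ≤ s.2 := by subst hs; dsimp only; omega
  have hs₂ : s.2 ≤ s.1 + e := by subst hs; dsimp only; omega
  let R (i : ℕ) := abacus (emptyPartition, emptyPartition) (chargeAfterPeriods e s i)
  have hchain : IsPeriodChain e R (fun i => period e (chargeAfterPeriods e s i)) :=
    isPeriodChain_abacus_empty hs₁ hs₂
  let c : ℕ → Partition × Partition := fun j => (column (e * j / 2), column (e * j / 2 + e * j % 2))
  have habacus (j : ℕ) : abacus (c j) s = shiftedAbacus R j := by
    rw [abacus_columns, ← chargeAfterPeriods_eq he (by subst hs; simp)]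
    rfl
  have heps' : e * k % 2 = eps := by
    rw [heps, Nat.mul_mod, Nat.odd_iff.1 he, one_mul, Nat.mod_mod]
    split_ifs <;> omega
  obtain rfl : bp = c k := by rw [hbp, ← heps']
  refine ⟨by rw [hs, tauCharge]; simp [add_comm],
    ⟨hasECore_twoRows _, by rw [if_pos rfl]; exact isTwoQuotient_twoRows _⟩,
    ⟨_, hchain.isPeriodSeq, by rw [habacus, hchain.shiftedAbacus_eq_biUnion]; rfl⟩,
    isSlInfSource_of_subset_shiftRight he.pos ⟨_, hchain.isPeriodSeq⟩
      (abacus_empty_subset_shiftRight s),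
    c, by simp [c, column_zero], rfl, fun j _ => ⟨j, hchain.slInfEdgeAt (habacus j) (habacus _)⟩⟩

/-- For `e ≥ 3` odd and `k ≥ 1` (with `ε = 0` if `k` even, `1` if `k`
odd): `τ(2^{ek}) = |(1^{⌊ek/2⌋}, 1^{⌊ek/2⌋+ε}), (-(e+1)/2, 0)⟩`, and this charged
bipartition is obtained from the abacus of the charged empty bipartition by moving each
of its first `k` `e`-periods one step to the right; in particular it has depth `k` in
the `sl_∞`-crystal, lying in the connected component whose source vertex is the empty
bipartition. -/
theorem twisted_quotient_two_rows
    (e k : ℕ) (he : Odd e) (he3 : 3 ≤ e) (hk : 1 ≤ k)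
    (eps : ℕ) (heps : eps = if k % 2 = 0 then 0 else 1)
    (s : ℤ × ℤ) (hs : s = (-(((e : ℤ) + 1) / 2), 0))
    (bp : Partition × Partition)
    (hbp : bp = (column (e * k / 2), column (e * k / 2 + eps))) :
    tauCharge e 0 = s ∧
    IsTwistedQuotient 0 (threeTwoOne 0 (e * k) 0) bp ∧
    (∃ P : ℕ → Set (ℤ × Fin 2),
      IsPeriodSeq e (abacus (emptyPartition, emptyPartition) s) P ∧
      abacus bp s =
        ((abacus (emptyPartition, emptyPartition) s) \ ⋃ i ∈ Finset.range k, P i) ∪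
          ⋃ i ∈ Finset.range k, shiftRight (P i)) ∧
    IsSlInfSource e s (emptyPartition, emptyPartition) ∧
    (∃ c : ℕ → Partition × Partition,
      c 0 = (emptyPartition, emptyPartition) ∧ c k = bp ∧
      ∀ j : ℕ, j < k → SlInfEdge e s (c j) (c (j + 1))) :=
  twisted_quotient_two_rows_general e k he eps heps s hs bp hbp

end GUnBranching
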